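/- arXiv:math/0701582 — 6 statements merged into one kernel-verified Lean document; each statement's English description precedes it below -/
import Mathlib

section
/- Let n ≤ m be positive integers, let u = (1,…,n) as a column vector, S the cyclic shift operator on ℤ^n, and A the n×m matrix whose columns are u, Su, …, S^{m-1}u, i.e., A(i,l) = ((i - l) mod n) + 1 for i ∈ Fin n, l ∈ Fin m. Then the n rows of A, viewed as points in ℤ^m, have pairwise distinct difference vectors, and no difference vector between distinct rows has any coordinate equal to 0. -/
/-- Row `i` of the Toeplitz array `A(i,l) = ((i - l) mod n) + 1`, as a vector in `ℤ^m`. -/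
def toeplitzRow (n m : ℕ) (i : Fin n) : Fin m → ℤ :=
  fun l => (((i : ℕ) : ℤ) - ((l : ℕ) : ℤ)) % (n : ℤ) + 1

/-!
On the first `n` columns, `(i - l) mod n` wraps around exactly when `i < l`, so there
`A(i,l) = i - l + 1 + n·[i < l]`. A difference vector of two rows therefore reads off
`i - j` at column `0`, and its values at columns `j` and `i'` leave no room for a second
pair with the same difference. A column is a permutation because `x ↦ x - l` is a
bijection modulo `n`.
-/

theorem Int.sub_emod_eq_of_nonneg_of_lt {x y n : ℤ} (hx : 0 ≤ x) (hxn : x < n)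
    (hy : 0 ≤ y) (hyn : y < n) : (x - y) % n = x - y + if x < y then n else 0 := by
  split_ifs with hxy
  · rw [← Int.add_emod_right (x - y) n]
    exact Int.emod_eq_of_lt (by omega) (by omega)
  · rw [add_zero]
    exact Int.emod_eq_of_lt (by omega) (by omega)

theorem toeplitzRow_castLE {n m : ℕ} (hnm : n ≤ m) (i l : Fin n) :
    toeplitzRow n m i (Fin.castLE hnm l) =
      (i : ℤ) - l + 1 + if (i : ℕ) < l then (n : ℤ) else 0 := by
  rw [toeplitzRow, Fin.val_castLE, Int.sub_emod_eq_of_nonneg_of_lt (by positivity)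
    (by exact_mod_cast i.isLt) (by positivity) (by exact_mod_cast l.isLt)]
  simp only [Nat.cast_lt]
  ring

theorem toeplitzRow_apply_injective {n m : ℕ} (l : Fin m) :
    Function.Injective fun i : Fin n => toeplitzRow n m i l := by
  intro i j hij
  have hmod : (i : ℤ) - l ≡ (j : ℤ) - l [ZMOD n] := add_right_cancel hij
  have hmod' : (i : ℕ) ≡ j [MOD n] := by simpa using hmod.add_right l
  rw [Nat.ModEq, Nat.mod_eq_of_lt i.isLt, Nat.mod_eq_of_lt j.isLt] at hmod'
  exact Fin.ext hmod'

theorem eq_and_eq_of_toeplitzRow_sub_eq {n m : ℕ} (hnm : n ≤ m) {i j i' j' : Fin n} (hij : i ≠ j)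
    (h : toeplitzRow n m i - toeplitzRow n m j = toeplitzRow n m i' - toeplitzRow n m j') :
    i = i' ∧ j = j' := by
  have hcol (l : Fin n) :
      (i : ℤ) - j + (if (i : ℕ) < l then (n : ℤ) else 0) - (if (j : ℕ) < l then (n : ℤ) else 0) =
        (i' : ℤ) - j' + (if (i' : ℕ) < l then (n : ℤ) else 0)
          - (if (j' : ℕ) < l then (n : ℤ) else 0) := by
    have := congrFun h (Fin.castLE hnm l)
    simp only [Pi.sub_apply, toeplitzRow_castLE] at this
    linarith
  have h0 := hcol ⟨0, i.pos⟩
  have hj := hcol j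
  have hi' := hcol i'
  simp only [Nat.not_lt_zero, lt_irrefl, if_false] at h0 hj hi'
  have hij' : (i : ℕ) ≠ j := Fin.val_ne_of_ne hij
  rw [Fin.ext_iff, Fin.ext_iff]
  split_ifs at hj hi' <;> omega

theorem toeplitz_costas_hypercube_general (n m : ℕ) (hnm : n ≤ m) :
    (∀ i j i' j' : Fin n, i ≠ j → i' ≠ j' →
        toeplitzRow n m i - toeplitzRow n m j =
          toeplitzRow n m i' - toeplitzRow n m j' →
        i = i' ∧ j = j') ∧
    (∀ i j : Fin n, i ≠ j → ∀ l : Fin m,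
        toeplitzRow n m i l ≠ toeplitzRow n m j l) :=
  ⟨fun _ _ _ _ hij _ h => eq_and_eq_of_toeplitzRow_sub_eq hnm hij h,
    fun _ _ hij l => (toeplitzRow_apply_injective l).ne hij⟩

/-- Toeplitz–Costas hypercubes: for `n ≤ m`, the rows of the Toeplitz array have
pairwise distinct difference vectors, none of which has a zero coordinate. -/
theorem toeplitz_costas_hypercube (n m : ℕ) (hn : 0 < n) (hnm : n ≤ m) :
    (∀ i j i' j' : Fin n, i ≠ j → i' ≠ j' →
        toeplitzRow n m i - toeplitzRow n m j =
          toeplitzRow n m i' - toeplitzRow n m j' →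
        i = i' ∧ j = j') ∧
    (∀ i j : Fin n, i ≠ j → ∀ l : Fin m,
        toeplitzRow n m i l ≠ toeplitzRow n m j l) :=
  toeplitz_costas_hypercube_general n m hnm
end

section
/- Fix i < j in Fin n. Consider the Toeplitz matrix A(i,l) = ((i−l) mod n) + 1 with m ≥ n columns, indices l ∈ Fin m, and let r_i, r_j denote its rows i and j. Then for l ∈ {0,…,m−1}, (r_i − r_j)(l) = i − j if l ≤ i or l > j (taking l mod n appropriately), and (r_i − r_j)(l) = n + i − j for the intermediate range i < l ≤ j; in particular the difference vector r_i − r_j determines (i,j) uniquely. -/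
lemma toeplitz_aux (n i k : ℕ) (hi : i < n) (hk : k < n) :
    ((i : ℤ) - (k : ℤ)) % (n : ℤ) =
      if k ≤ i then (i : ℤ) - k else (i : ℤ) - k + n := by
  split
  · exact Int.emod_eq_of_lt (by omega) (by omega)
  · rw [← Int.add_emod_right]
    exact Int.emod_eq_of_lt (by omega) (by omega)

lemma toeplitz_coord (n m : ℕ) (hn : 0 < n) (i : Fin n) (l : Fin m) :
    toeplitzRow n m i l =
      (if (l : ℕ) % n ≤ (i : ℕ) then ((i : ℕ) : ℤ) - (((l : ℕ) % n : ℕ) : ℤ)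
       else ((i : ℕ) : ℤ) - (((l : ℕ) % n : ℕ) : ℤ) + n) + 1 := by
  have h2 : ((l : ℕ) : ℤ) % (n : ℤ) = (((l : ℕ) % n : ℕ) : ℤ) % (n : ℤ) := by
    push_cast
    rw [Int.emod_emod_of_dvd _ dvd_rfl]
  have h1 : (((i : ℕ) : ℤ) - ((l : ℕ) : ℤ)) % (n : ℤ)
      = (((i : ℕ) : ℤ) - (((l : ℕ) % n : ℕ) : ℤ)) % (n : ℤ) := by
    rw [Int.sub_emod, h2, ← Int.sub_emod]
  rw [toeplitzRow, h1, toeplitz_aux n i ((l : ℕ) % n) i.isLt (Nat.mod_lt _ hn)]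

/-- Coordinates of the difference of two rows of the Toeplitz array: for `i < j`,
the `l`-th coordinate equals `i - j` unless `i < l mod n ≤ j`, in which case it
equals `n + i - j`; in particular the difference vector determines `(i,j)`. -/
theorem toeplitz_row_difference (n m : ℕ) (hn : 0 < n) (hnm : n ≤ m)
    (i j : Fin n) (hij : i < j) :
    (∀ l : Fin m,
      (((i : ℕ) < (l : ℕ) % n ∧ (l : ℕ) % n ≤ (j : ℕ)) →
        toeplitzRow n m i l - toeplitzRow n m j l =
          (n : ℤ) + ((i : ℕ) : ℤ) - ((j : ℕ) : ℤ)) ∧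
      (¬ ((i : ℕ) < (l : ℕ) % n ∧ (l : ℕ) % n ≤ (j : ℕ)) →
        toeplitzRow n m i l - toeplitzRow n m j l =
          ((i : ℕ) : ℤ) - ((j : ℕ) : ℤ))) ∧
    (∀ i' j' : Fin n, i' < j' →
      toeplitzRow n m i - toeplitzRow n m j =
        toeplitzRow n m i' - toeplitzRow n m j' →
      i = i' ∧ j = j') := by
  have hij' : (i : ℕ) < (j : ℕ) := hij
  constructor
  · intro l
    rw [toeplitz_coord n m hn i l, toeplitz_coord n m hn j l]
    constructor <;> intro h <;> split_ifs <;> omega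
  · intro i' j' h' heq
    have hij'' : (i' : ℕ) < (j' : ℕ) := h'
    have e0 := congrFun heq ⟨0, by omega⟩
    have ej := congrFun heq ⟨(j : ℕ), by omega⟩
    have ej' := congrFun heq ⟨(j' : ℕ), by omega⟩
    simp only [Pi.sub_apply, toeplitz_coord n m hn] at e0 ej ej'
    simp only [Nat.zero_mod, Nat.mod_eq_of_lt j.isLt, Nat.mod_eq_of_lt j'.isLt,
      Nat.zero_le, if_true, le_refl] at e0 ej ej'
    have key : (i : ℕ) = (i' : ℕ) ∧ (j : ℕ) = (j' : ℕ) := by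
      split_ifs at e0 ej ej' <;> omega
    exact ⟨Fin.ext key.1, Fin.ext key.2⟩
end

section
/- Let n, m ∈ ℕ with n ≥ 2, and let g : Fin (n^m) → Fin (n^m) be a Costas permutation. Let V : Fin (n^m) → (Fin n)^m be base-n digit expansion. Then the dots {(V(i), V(g(i))) : i ∈ Fin (n^m)} form a permutation Costas hypercube of side n in 2m dimensions: (a) the map i ↦ V(i) is bijective, the map i ↦ V(g(i)) is bijective, and (b) the differences (V(i)−V(j), V(g(i))−V(g(j))) over distinct pairs (i,j) are pairwise distinct. -/
/-!
Up to reversing the order of the digits, `baseDigits` is Mathlib's `finFunctionFinEquiv.symm`,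
hence a bijection. Moreover `i` is recovered from its integer digit vector by the linear map
`v ↦ ∑ k, v k * n ^ (m - 1 - k)`, so equal digit differences force equal integer differences,
and the Costas property of `g` does the rest.
-/

/-- Base-`n` digit expansion of `i ∈ Fin (n^m)` as a vector of digits in `Fin n`. -/
def baseDigits (n m : ℕ) (hn : 0 < n) (i : Fin (n ^ m)) : Fin m → Fin n :=
  fun j => ⟨((i : ℕ) / n ^ (m - 1 - (j : ℕ))) % n, Nat.mod_lt _ hn⟩

/-- Base-`n` digit expansion as a vector in `ℤ^m`. -/
def baseDigitsZ (n m : ℕ) (i : ℕ) : Fin m → ℤ :=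
  fun j => ((i / n ^ (m - 1 - (j : ℕ))) % n : ℕ)

open Matrix

namespace Costas

variable {n m : ℕ}

theorem sub_one_sub_eq_val_rev (k : Fin m) : m - 1 - (k : ℕ) = k.rev := by
  rw [Fin.val_rev]
  omega

theorem baseDigitsZ_apply (i : Fin (n ^ m)) (k : Fin m) :
    baseDigitsZ n m i k = (finFunctionFinEquiv.symm i k.rev : ℕ) := by
  rw [baseDigitsZ, finFunctionFinEquiv_symm_apply_val, sub_one_sub_eq_val_rev]

theorem baseDigits_bijective (hn : 0 < n) : Function.Bijective (baseDigits n m hn) := by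
  have h : baseDigits n m hn =
      finFunctionFinEquiv.symm.trans (Fin.revPerm.arrowCongr (.refl _)) := by
    funext i k
    ext
    simp [baseDigits, finFunctionFinEquiv_symm_apply_val, sub_one_sub_eq_val_rev]
  rw [h]
  exact Equiv.bijective _

theorem baseDigitsZ_dotProduct_pow (i : Fin (n ^ m)) :
    baseDigitsZ n m i ⬝ᵥ (fun k : Fin m => (n : ℤ) ^ (m - 1 - (k : ℕ))) = i := by
  have h := congrArg (Nat.cast : ℕ → ℤ) (finFunctionFinEquiv_apply (finFunctionFinEquiv.symm i))
  rw [Equiv.apply_symm_apply, ← Equiv.sum_comp Fin.revPerm] at h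
  rw [dotProduct, h]
  push_cast
  simp [baseDigitsZ_apply, sub_one_sub_eq_val_rev]

theorem val_sub_eq_of_baseDigitsZ_sub_eq {i j i' j' : Fin (n ^ m)}
    (h : baseDigitsZ n m i - baseDigitsZ n m j = baseDigitsZ n m i' - baseDigitsZ n m j') :
    ((i : ℕ) : ℤ) - (j : ℕ) = ((i' : ℕ) : ℤ) - (j' : ℕ) := by
  simpa only [sub_dotProduct, baseDigitsZ_dotProduct_pow] using
    congrArg (· ⬝ᵥ fun k : Fin m => (n : ℤ) ^ (m - 1 - (k : ℕ))) h

end Costas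

open Costas in
/-- Reshaping a Costas permutation of order `n^m` gives a permutation Costas
hypercube of side `n` in `2m` dimensions: both halves of the dot coordinates are
bijections, and the difference vectors over distinct pairs are pairwise distinct. -/
theorem costas_hypercube_even_dimension (n m : ℕ) (hn : 2 ≤ n)
    (g : Equiv.Perm (Fin (n ^ m)))
    (hg : ∀ i j i' j' : Fin (n ^ m), i ≠ j → i' ≠ j' →
      (((i : ℕ) : ℤ) - ((j : ℕ) : ℤ), ((g i : ℕ) : ℤ) - ((g j : ℕ) : ℤ)) =
      (((i' : ℕ) : ℤ) - ((j' : ℕ) : ℤ), ((g i' : ℕ) : ℤ) - ((g j' : ℕ) : ℤ)) →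
      i = i' ∧ j = j') :
    Function.Bijective (baseDigits n m (by omega)) ∧
    Function.Bijective (fun i => baseDigits n m (by omega) (g i)) ∧
    (∀ i j i' j' : Fin (n ^ m), i ≠ j → i' ≠ j' →
      baseDigitsZ n m i - baseDigitsZ n m j =
        baseDigitsZ n m i' - baseDigitsZ n m j' →
      baseDigitsZ n m (g i) - baseDigitsZ n m (g j) =
        baseDigitsZ n m (g i') - baseDigitsZ n m (g j') →
      i = i' ∧ j = j') := by
  refine ⟨baseDigits_bijective _, (baseDigits_bijective _).comp g.bijective, ?_⟩
  intro i j i' j' hij hij' hdom hcod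
  exact hg i j i' j' hij hij' <| Prod.ext
    (val_sub_eq_of_baseDigitsZ_sub_eq hdom) (val_sub_eq_of_baseDigitsZ_sub_eq hcod)
end

section
/- Let q = p^m with p prime, let F be the field with q elements, and let g be a generator of the multiplicative group F*. Fix c ∈ ℕ. Then the map f : Fin (q−1) → F* defined by f(i) = g^(i+c) is a bijection, and the set of pairs {(i, f(i)) : i ∈ Fin (q−1)} ⊆ ℤ × F has the Costas property: if i₁ ≠ i₂, i₁ − i₂ = i₃ − i₄ (with all indices in Fin (q−1)) and f(i₁) − f(i₂) = f(i₃) − f(i₄) in F, then i₁ = i₃ and i₂ = i₄. -/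
/-- Extended Welch construction: for `F = GF(p^m)` with multiplicative generator `g`
and shift `c`, the map `f i = g^(i+c)` is a bijection onto `F*`, and the set
`{(i, f i)}` has the Costas property. -/
theorem welch_extension (p m : ℕ) (hp : p.Prime) (F : Type*) [Field F] [Fintype F]
    [DecidableEq F] (hcard : Fintype.card F = p ^ m)
    (g : Fˣ) (hg : ∀ x : Fˣ, x ∈ Subgroup.zpowers g) (c : ℕ) :
    Function.Bijective
      (fun i : Fin (Fintype.card F - 1) => g ^ ((i : ℕ) + c)) ∧
    (∀ i₁ i₂ i₃ i₄ : Fin (Fintype.card F - 1), i₁ ≠ i₂ →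
      ((i₁ : ℕ) : ℤ) - ((i₂ : ℕ) : ℤ) = ((i₃ : ℕ) : ℤ) - ((i₄ : ℕ) : ℤ) →
      ((g ^ ((i₁ : ℕ) + c) : Fˣ) : F) - ((g ^ ((i₂ : ℕ) + c) : Fˣ) : F) =
        ((g ^ ((i₃ : ℕ) + c) : Fˣ) : F) - ((g ^ ((i₄ : ℕ) + c) : Fˣ) : F) →
      i₁ = i₃ ∧ i₂ = i₄) := by
  have ho : orderOf g = Fintype.card F - 1 := by
    rw [orderOf_eq_card_of_forall_mem_zpowers hg, Nat.card_eq_fintype_card, Fintype.card_units]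
  have hinj : Function.Injective
      (fun i : Fin (Fintype.card F - 1) => g ^ ((i : ℕ) + c)) := by
    intro i j h
    simp only [pow_add] at h
    have h2 : g ^ (i : ℕ) = g ^ (j : ℕ) := mul_right_cancel h
    rw [pow_eq_pow_iff_modEq, ho] at h2
    exact Fin.ext (Nat.ModEq.eq_of_lt_of_lt h2 i.isLt j.isLt)
  constructor
  · refine (Fintype.bijective_iff_injective_and_card _).mpr ⟨hinj, ?_⟩
    simp [Fintype.card_units]
  · intro i₁ i₂ i₃ i₄ hne hdiff heq
    have hd : ∃ d : ℤ, d = ((i₃ : ℕ) : ℤ) - ((i₁ : ℕ) : ℤ) := ⟨_, rfl⟩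
    obtain ⟨d, hd⟩ := hd
    have e3 : (g ^ ((i₃ : ℕ) + c) : Fˣ) = g ^ (((i₁ : ℕ) + c : ℕ) : ℤ) * g ^ d := by
      rw [← zpow_add, ← zpow_natCast g ((i₃ : ℕ) + c)]
      congr 1
      rw [hd]
      push_cast
      ring
    have e4 : (g ^ ((i₄ : ℕ) + c) : Fˣ) = g ^ (((i₂ : ℕ) + c : ℕ) : ℤ) * g ^ d := by
      rw [← zpow_add, ← zpow_natCast g ((i₄ : ℕ) + c)]
      congr 1
      rw [hd]
      push_cast
      omega
    rw [e3, e4] at heq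
    rw [zpow_natCast, zpow_natCast] at heq
    rw [Units.val_mul, Units.val_mul] at heq
    have hab : ((g ^ ((i₁ : ℕ) + c) : Fˣ) : F) - ((g ^ ((i₂ : ℕ) + c) : Fˣ) : F) ≠ 0 := by
      intro h0
      apply hne
      apply hinj
      exact Units.ext (sub_eq_zero.mp h0)
    have hu : ((g ^ d : Fˣ) : F) = 1 := by
      have h1 : (((g ^ d : Fˣ) : F) - 1) * (((g ^ ((i₁ : ℕ) + c) : Fˣ) : F)
          - ((g ^ ((i₂ : ℕ) + c) : Fˣ) : F)) = 0 := by linear_combination -heq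
      rcases mul_eq_zero.mp h1 with h | h
      · exact sub_eq_zero.mp h
      · exact absurd h hab
    have hgd : g ^ d = 1 := Units.ext (by simpa using hu)
    have hdvd : ((Fintype.card F - 1 : ℕ) : ℤ) ∣ d := by
      rw [← ho]
      exact orderOf_dvd_iff_zpow_eq_one.mpr hgd
    have hd0 : d = 0 := by
      refine Int.eq_zero_of_abs_lt_dvd hdvd ?_
      have h1 : (i₁ : ℕ) < Fintype.card F - 1 := i₁.isLt
      have h3 : (i₃ : ℕ) < Fintype.card F - 1 := i₃.isLt
      rw [hd, abs_sub_lt_iff]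
      omega
    rw [hd] at hd0
    have h13 : i₁ = i₃ := Fin.ext (by omega)
    have h24 : i₂ = i₄ := Fin.ext (by omega)
    exact ⟨h13, h24⟩
end

section
/- Let F = GF(p^m), g a generator of F*, c ∈ ℕ, and let φ : F → (ZMod p)^m be any ZMod p-linear bijection (isomorphism of F as a vector space over its prime field onto the coordinate space). Define f : Fin (q−1) → (ZMod p)^m by f(i) = φ(g^{i+c}), where q = p^m. Then the set {(i, f(i)) : i ∈ Fin (q−1)} has the Costas property: i₁ − i₂ = i₃ − i₄ and f(i₁) − f(i₂) = f(i₃) − f(i₄) with i₁ ≠ i₂ implies i₁ = i₃ and i₂ = i₄. -/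
/-!
Write `x i = g ^ (i + c)`. If `i₃ = i₁ + k` and `i₄ = i₂ + k`, then
`x i₃ - x i₄ = g ^ k * (x i₁ - x i₂)`, so equal differences force `g ^ k = 1` (the difference is
nonzero because `i ↦ g ^ i` is injective below the order of `g`). Since `|k|` is less than the
order of `g`, `k = 0`. An injective additive map `φ` preserves differences and their equality,
so the Costas property survives composing with `φ`.
-/

def IsCostas {n : ℕ} {A : Type*} [AddGroup A] (f : Fin n → A) : Prop :=
  ∀ i₁ i₂ i₃ i₄ : Fin n, i₁ ≠ i₂ →
    ((i₁ : ℕ) : ℤ) - ((i₂ : ℕ) : ℤ) = ((i₃ : ℕ) : ℤ) - ((i₄ : ℕ) : ℤ) →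
    f i₁ - f i₂ = f i₃ - f i₄ → i₁ = i₃ ∧ i₂ = i₄

theorem IsCostas.comp {n : ℕ} {A B : Type*} [AddGroup A] [AddGroup B] {f : Fin n → A}
    (hf : IsCostas f) {φ : A →+ B} (hφ : Function.Injective φ) : IsCostas (φ ∘ f) :=
  fun i₁ i₂ i₃ i₄ hne hidx hval =>
    hf i₁ i₂ i₃ i₄ hne hidx (hφ (by simpa only [Function.comp_apply, map_sub] using hval))

theorem Units.eq_one_of_mul_sub_mul_eq_sub {R : Type*} [Ring R] [IsDomain R] {u : Rˣ} {a b : R}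
    (hab : a ≠ b) (h : (u : R) * a - u * b = a - b) : u = 1 :=
  Units.val_eq_one.mp <| (mul_eq_right₀ (sub_ne_zero.mpr hab)).mp (by rwa [mul_sub])

theorem pow_add_injOn_Iio_orderOf {G : Type*} [LeftCancelMonoid G] (x : G) (c : ℕ) :
    Set.InjOn (fun i : ℕ => x ^ (i + c)) (Set.Iio (orderOf x)) := fun _ hi _ hj h =>
  Nat.ModEq.eq_of_lt_of_lt ((pow_eq_pow_iff_modEq (x := x).mp h).add_right_cancel' c) hi hj

theorem isCostas_units_pow {R : Type*} [Ring R] [IsDomain R] (g : Rˣ) (c : ℕ) {n : ℕ}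
    (hn : orderOf g = n) : IsCostas fun i : Fin n => ((g ^ ((i : ℕ) + c) : Rˣ) : R) := by
  subst hn
  intro i₁ i₂ i₃ i₄ hne hidx hval
  set k : ℤ := (i₃ : ℤ) - i₁
  have shift : ∀ i j : Fin (orderOf g), (j : ℤ) = k + i →
      ((g ^ ((j : ℕ) + c) : Rˣ) : R) = (g ^ k : Rˣ) * (g ^ ((i : ℕ) + c) : Rˣ) := by
    intro i j hij
    rw [← Units.val_mul, ← zpow_natCast, ← zpow_natCast, ← zpow_add]
    push_cast
    rw [hij, add_assoc]
  have hdist : ((g ^ ((i₁ : ℕ) + c) : Rˣ) : R) ≠ (g ^ ((i₂ : ℕ) + c) : Rˣ) := fun h =>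
    hne (Fin.ext (pow_add_injOn_Iio_orderOf g c i₁.isLt i₂.isLt (Units.val_injective h)))
  have hgk : g ^ k = 1 := by
    refine Units.eq_one_of_mul_sub_mul_eq_sub hdist ?_
    rw [← shift i₁ i₃ (by omega), ← shift i₂ i₄ (by omega), hval]
  have hk : k = 0 :=
    Int.eq_zero_of_abs_lt_dvd (orderOf_dvd_iff_zpow_eq_one.mpr hgk)
      (abs_lt.mpr ⟨by omega, by omega⟩)
  exact ⟨Fin.ext (by omega), Fin.ext (by omega)⟩

theorem welch_extension_arbitrary_basis_general (p m : ℕ)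
    (F : Type*) [Field F] [Fintype F] [Algebra (ZMod p) F]
    (g : Fˣ) (hg : ∀ x : Fˣ, x ∈ Subgroup.zpowers g) (c : ℕ)
    (φ : F ≃ₗ[ZMod p] (Fin m → ZMod p)) :
    ∀ i₁ i₂ i₃ i₄ : Fin (Fintype.card F - 1), i₁ ≠ i₂ →
      ((i₁ : ℕ) : ℤ) - ((i₂ : ℕ) : ℤ) = ((i₃ : ℕ) : ℤ) - ((i₄ : ℕ) : ℤ) →
      φ ((g ^ ((i₁ : ℕ) + c) : Fˣ) : F) - φ ((g ^ ((i₂ : ℕ) + c) : Fˣ) : F) =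
        φ ((g ^ ((i₃ : ℕ) + c) : Fˣ) : F) - φ ((g ^ ((i₄ : ℕ) + c) : Fˣ) : F) →
      i₁ = i₃ ∧ i₂ = i₄ := by
  have hord : orderOf g = Fintype.card F - 1 := by
    rw [orderOf_eq_card_of_forall_mem_zpowers hg, Nat.card_units, Nat.card_eq_fintype_card]
  exact (isCostas_units_pow g c hord).comp (φ := φ.toAddMonoidHom) φ.injective

/-- Generalized Welch construction with an arbitrary basis: composing the Welch
exponential with any `ZMod p`-linear isomorphism `φ : F ≃ (ZMod p)^m` yields a set
`{(i, φ(g^(i+c)))}` with the Costas property. -/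
theorem welch_extension_arbitrary_basis (p m : ℕ) (hp : p.Prime)
    (F : Type*) [Field F] [Fintype F] [Algebra (ZMod p) F]
    (hcard : Fintype.card F = p ^ m)
    (g : Fˣ) (hg : ∀ x : Fˣ, x ∈ Subgroup.zpowers g) (c : ℕ)
    (φ : F ≃ₗ[ZMod p] (Fin m → ZMod p)) :
    ∀ i₁ i₂ i₃ i₄ : Fin (Fintype.card F - 1), i₁ ≠ i₂ →
      ((i₁ : ℕ) : ℤ) - ((i₂ : ℕ) : ℤ) = ((i₃ : ℕ) : ℤ) - ((i₄ : ℕ) : ℤ) →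
      φ ((g ^ ((i₁ : ℕ) + c) : Fˣ) : F) - φ ((g ^ ((i₂ : ℕ) + c) : Fˣ) : F) =
        φ ((g ^ ((i₃ : ℕ) + c) : Fˣ) : F) - φ ((g ^ ((i₄ : ℕ) + c) : Fˣ) : F) →
      i₁ = i₃ ∧ i₂ = i₄ :=
  welch_extension_arbitrary_basis_general p m F g hg c φ
end

section
/- In any finite field F = GF(p^m) there exists an element b ∈ F such that {b, b^p, b^{p²}, …, b^{p^{m−1}}} is a basis of F as a vector space over GF(p) (a normal basis). Moreover, if x has coordinates (x₀, x₁, …, x_{m−1}) with respect to this basis, then x^p has coordinates (x_{m−1}, x₀, …, x_{m−2}), i.e., the Frobenius map acts as a cyclic shift of coordinates. -/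
open Polynomial DirectSum

namespace NBAux

variable (p : ℕ) [Fact p.Prime] (F : Type*) [Field F] [Fintype F] [Algebra (ZMod p) F]

noncomputable def frob : Module.End (ZMod p) F where
  toFun x := x ^ p
  map_add' x y := by
    haveI : CharP F p := charP_of_injective_algebraMap (algebraMap (ZMod p) F).injective p
    exact add_pow_char x y (p:=p)
  map_smul' c x := by
    simp only [RingHom.id_apply, Algebra.smul_def, mul_pow, ← map_pow, ZMod.pow_card]

variable {p F}

lemma frob_pow_apply (k : ℕ) (x : F) : ((frob p F) ^ k) x = x ^ p ^ k := by
  induction k with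
  | zero => simp
  | succ k ih =>
    rw [pow_succ', Module.End.mul_apply, ih]
    show (x ^ p ^ k) ^ p = _
    rw [← pow_mul, ← pow_succ]

variable {m : ℕ} (hm : 0 < m) (hcard : Fintype.card F = p ^ m)

include hcard in
lemma aeval_g : aeval (frob p F) ((X : (ZMod p)[X]) ^ m - 1) = 0 := by
  rw [map_sub, map_pow, aeval_X, map_one]
  ext x
  have h := FiniteField.pow_card x
  rw [hcard] at h
  simp [frob_pow_apply, h]

include hcard in
lemma exists_ne_zero {h : (ZMod p)[X]} (hne : h ≠ 0) (hdeg : h.natDegree < m) :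
    ∃ x : F, aeval (frob p F) h x ≠ 0 := by
  classical
  have hp2 : 2 ≤ p := (Fact.out : p.Prime).two_le
  set d := h.natDegree with hd
  set P : F[X] := ∑ i ∈ Finset.range (d + 1),
      C (algebraMap (ZMod p) F (h.coeff i)) * X ^ (p ^ i) with hP
  have hPcoeff : P.coeff (p ^ d) = algebraMap (ZMod p) F (h.coeff d) := by
    rw [hP, finset_sum_coeff]
    rw [Finset.sum_eq_single d]
    · simp
    · intro i hi hne'
      rw [coeff_C_mul, coeff_X_pow, if_neg, mul_zero]
      exact fun hc => hne' (Nat.pow_right_injective hp2 hc.symm)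
    · intro hd'
      exact absurd (Finset.self_mem_range_succ d) hd'
  have hPne : P ≠ 0 := fun h0 => by
    have : algebraMap (ZMod p) F (h.coeff d) ≠ 0 := fun hc =>
      (mt (_root_.map_eq_zero (algebraMap (ZMod p) F)).mp (leadingCoeff_ne_zero.mpr hne)) hc
    rw [h0, coeff_zero] at hPcoeff
    exact this hPcoeff.symm
  have hPdeg : P.natDegree ≤ p ^ d := by
    refine natDegree_sum_le_of_forall_le _ _ fun i hi => ?_
    refine (natDegree_C_mul_le _ _).trans ?_
    rw [natDegree_X_pow]
    exact Nat.pow_le_pow_right (by omega) (Nat.lt_succ_iff.mp (Finset.mem_range.mp hi))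
  obtain ⟨x, hx⟩ := P.exists_eval_ne_zero_of_natDegree_lt_card hPne (by
    rw [Cardinal.mk_fintype, hcard]
    exact_mod_cast lt_of_le_of_lt hPdeg (Nat.pow_lt_pow_right (by omega) hdeg))
  refine ⟨x, fun hc => hx ?_⟩
  have : aeval (frob p F) h x = P.eval x := by
    rw [aeval_eq_sum_range, hP]
    rw [LinearMap.coe_sum, Finset.sum_apply, eval_finset_sum]
    refine Finset.sum_congr rfl fun i _ => ?_
    rw [LinearMap.smul_apply, frob_pow_apply, eval_mul, eval_C, eval_pow, eval_X,
      Algebra.smul_def]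
  rw [← this, hc]

include hm hcard in
lemma g_dvd_of_aeval_eq_zero {h : (ZMod p)[X]} (hann : aeval (frob p F) h = 0) :
    ((X : (ZMod p)[X]) ^ m - 1) ∣ h := by
  set g : (ZMod p)[X] := X ^ m - 1 with hg
  have hgC : g = X ^ m - C 1 := by rw [map_one]
  have hmonic : g.Monic := by rw [hgC]; exact monic_X_pow_sub_C 1 hm.ne'
  rw [← (modByMonic_eq_zero_iff_dvd hmonic)]
  by_contra hr
  have hdeg : (h %ₘ g).natDegree < m := by
    have hg1 : g ≠ 1 := fun h1 => by
      have : g.natDegree = m := by rw [hgC, natDegree_X_pow_sub_C]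
      rw [h1, natDegree_one] at this
      omega
    have := natDegree_modByMonic_lt h hmonic hg1
    have hgm : g.natDegree = m := by rw [hgC, natDegree_X_pow_sub_C]
    omega
  obtain ⟨x, hx⟩ := exists_ne_zero hcard hr hdeg
  apply hx
  have : h %ₘ g = h - g * (h /ₘ g) := by
    rw [eq_sub_iff_add_eq, modByMonic_add_div h g]
  rw [this, map_sub, map_mul, hann]
  simp [hg, aeval_g hcard]

variable (φ : Module.End (ZMod p) F)
variable (hg0 : aeval φ ((X : (ZMod p)[X]) ^ m - 1) = 0)
variable (hK3v : ∀ h : (ZMod p)[X], aeval φ h = 0 → ((X : (ZMod p)[X]) ^ m - 1) ∣ h)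

set_option maxHeartbeats 1000000 in
include hm hg0 hK3v in
lemma exists_b : ∃ b : F, ∀ h : (ZMod p)[X],
    aeval φ h b = 0 → ((X : (ZMod p)[X]) ^ m - 1) ∣ h := by
  classical
  set A := (ZMod p)[X]
  set g : A := X ^ m - 1 with hgdef
  have hmonic : g.Monic := by
    have : g = X ^ m - C 1 := by rw [map_one]
    rw [this]; exact monic_X_pow_sub_C 1 hm.ne'
  have hgne : g ≠ 0 := hmonic.ne_zero
  have htor : Module.IsTorsion A (Module.AEval' φ) := by
    intro x
    refine ⟨⟨g, mem_nonZeroDivisors_of_ne_zero hgne⟩, ?_⟩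
    show g • x = 0
    apply (Module.AEval.of (ZMod p) F φ).symm.injective
    rw [map_zero, Module.AEval.of_symm_smul, hg0]
    simp
  obtain ⟨ι, hι, q, hq, e, ⟨l⟩⟩ := Module.equiv_directSum_of_isTorsion htor
  haveI := hι
  set u : ⨁ i : ι, A ⧸ (A ∙ q i ^ e i) :=
    ∑ i, DirectSum.lof A ι (fun i => A ⧸ (A ∙ q i ^ e i)) i
      (Submodule.Quotient.mk 1) with hu
  set b : F := (Module.AEval.of (ZMod p) F φ).symm (l.symm u) with hb
  refine ⟨b, fun h hhb => ?_⟩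
  -- h • u = 0
  have h1 : h • u = 0 := by
    have : h • (l.symm u) = 0 := by
      have := Module.AEval.of_aeval_smul φ h ((Module.AEval.of (ZMod p) F φ).symm (l.symm u))
      rw [show aeval φ h • ((Module.AEval.of (ZMod p) F φ).symm (l.symm u)) = aeval φ h b from rfl,
        hhb, map_zero] at this
      simpa using this.symm
    have := congrArg l (this)
    rwa [map_smul, map_zero, LinearEquiv.apply_symm_apply] at this
  -- componentwise
  have h2 : ∀ i : ι, q i ^ e i ∣ h := by
    intro i
    have hui : u i = Submodule.Quotient.mk 1 := by
      rw [hu, DFinsupp.finset_sum_apply, Finset.sum_eq_single i]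
      · rw [DirectSum.lof_eq_of, DirectSum.of_eq_same]
      · intro j _ hji
        rw [DirectSum.lof_eq_of, DirectSum.of_eq_of_ne _ _ _ hji.symm]
      · intro hi; exact absurd (Finset.mem_univ i) hi
    have hz : h • u i = 0 := by
      have h6 : (h • u) i = (0 : ⨁ i : ι, A ⧸ (A ∙ q i ^ e i)) i := by rw [h1]
      rwa [DirectSum.smul_apply, DirectSum.zero_apply] at h6
    have key : (Submodule.Quotient.mk (h • (1 : A)) : A ⧸ (A ∙ q i ^ e i)) = 0 := by
      rw [Submodule.Quotient.mk_smul, ← hui]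
      exact hz
    rw [smul_eq_mul, mul_one] at key
    obtain ⟨c, hc⟩ := Submodule.mem_span_singleton.mp ((Submodule.Quotient.mk_eq_zero _).mp key)
    exact ⟨c, by rw [← hc, smul_eq_mul, mul_comm]⟩
  set L : A := Finset.univ.lcm (fun i => q i ^ e i) with hL
  have hLh : L ∣ h := Finset.lcm_dvd (fun i _ => h2 i)
  -- L kills the direct sum
  have hLsmul : ∀ (i : ι) (w : A ⧸ (A ∙ q i ^ e i)), L • w = 0 := by
    intro i w
    obtain ⟨a, rfl⟩ := Submodule.Quotient.mk_surjective _ w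
    rw [← Submodule.Quotient.mk_smul, Submodule.Quotient.mk_eq_zero,
      Submodule.mem_span_singleton]
    have hdv : q i ^ e i ∣ L * a := dvd_mul_of_dvd_left (Finset.dvd_lcm (Finset.mem_univ i)) a
    obtain ⟨c, hc⟩ := hdv
    exact ⟨c, by rw [smul_eq_mul, smul_eq_mul, mul_comm]; exact hc.symm⟩
  have hLkill : ∀ z : ⨁ i : ι, A ⧸ (A ∙ q i ^ e i), L • z = 0 := by
    intro z
    induction z using DirectSum.induction_on with
    | zero => simp
    | of i w =>
      rw [← DirectSum.lof_eq_of A, ← map_smul, hLsmul, map_zero]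
    | add x y hx hy => rw [smul_add, hx, hy, add_zero]
  have hLann : aeval φ L = 0 := by
    ext y
    have : L • (Module.AEval.of (ZMod p) F φ y) = 0 := by
      apply l.injective
      rw [map_smul, map_zero, hLkill]
    have h3 := congrArg (Module.AEval.of (ZMod p) F φ).symm this
    rw [Module.AEval.of_symm_smul, map_zero, LinearEquiv.symm_apply_apply] at h3
    exact h3
  exact dvd_trans (hK3v L hLann) hLh


end NBAux

/-- Normal basis theorem for finite fields, with the Frobenius acting as a cyclic
shift of coordinates: there is `b ∈ F = GF(p^m)` such that `b, b^p, …, b^(p^(m-1))`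
form a basis of `F` over `GF(p)`, and the coordinates of `x^p` are the cyclic shift
of those of `x`. -/
theorem normal_basis_frobenius_shift (p m : ℕ) (hp : p.Prime) (hm : 0 < m)
    (F : Type*) [Field F] [Fintype F] [Algebra (ZMod p) F]
    (hcard : Fintype.card F = p ^ m) :
    ∃ (b : F) (B : Module.Basis (Fin m) (ZMod p) F),
      (∀ i : Fin m, B i = b ^ (p ^ (i : ℕ))) ∧
      (∀ (x : F) (i : Fin m),
        B.repr (x ^ p) i = B.repr x ⟨((i : ℕ) + m - 1) % m, Nat.mod_lt _ hm⟩) := by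
  classical
  haveI : Fact p.Prime := ⟨hp⟩
  haveI : NeZero m := ⟨hm.ne'⟩
  set φ := NBAux.frob p F with hφ
  obtain ⟨b, hb⟩ := NBAux.exists_b hm φ (NBAux.aeval_g hcard)
    (fun h hz => NBAux.g_dvd_of_aeval_eq_zero hm hcard hz)
  have hbm : b ^ p ^ m = b := by
    have := FiniteField.pow_card b; rwa [hcard] at this
  set v : Fin m → F := fun i => b ^ p ^ (i : ℕ) with hv
  have hdegg : ((X : (ZMod p)[X]) ^ m - 1).degree = m := by
    rw [show ((X : (ZMod p)[X]) ^ m - 1) = X ^ m - C 1 by rw [map_one]]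
    exact degree_X_pow_sub_C hm 1
  have li : LinearIndependent (ZMod p) v := by
    rw [Fintype.linearIndependent_iff]
    intro c hc
    set hpoly : (ZMod p)[X] := ∑ j : Fin m, C (c j) * X ^ (j : ℕ) with hhp
    have hav : aeval φ hpoly b = 0 := by
      rw [hhp, map_sum, LinearMap.coe_sum, Finset.sum_apply, ← hc]
      refine Finset.sum_congr rfl fun j _ => ?_
      rw [map_mul, aeval_C, map_pow, aeval_X, Module.End.mul_apply,
        Module.algebraMap_end_apply, NBAux.frob_pow_apply]
    have hdvd := hb hpoly hav
    have hdeg : hpoly.degree < ((X : (ZMod p)[X]) ^ m - 1).degree := by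
      rw [hdegg, hhp]
      refine lt_of_le_of_lt (degree_sum_le _ _) ?_
      rw [Finset.sup_lt_iff (by exact_mod_cast WithBot.bot_lt_coe m)]
      intro j _
      exact lt_of_le_of_lt (degree_C_mul_X_pow_le _ _)
        (by exact_mod_cast j.isLt)
    have h0 : hpoly = 0 := eq_zero_of_dvd_of_degree_lt hdvd hdeg
    intro i
    have hco : hpoly.coeff (i : ℕ) = c i := by
      rw [hhp, finset_sum_coeff, Finset.sum_eq_single i]
      · rw [coeff_C_mul, coeff_X_pow, if_pos rfl, mul_one]
      · intro j _ hji
        rw [coeff_C_mul, coeff_X_pow, if_neg (fun hc' => hji (Fin.ext hc'.symm)), mul_zero]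
      · intro hi; exact absurd (Finset.mem_univ i) hi
    rw [h0, coeff_zero] at hco
    exact hco.symm
  have hfr : Module.finrank (ZMod p) F = m := by
    have h1 : Fintype.card F = Fintype.card (ZMod p) ^ Module.finrank (ZMod p) F :=
      Module.card_eq_pow_finrank
    rw [hcard, ZMod.card] at h1
    exact (Nat.pow_right_injective hp.two_le h1.symm)
  haveI : Nonempty (Fin m) := ⟨⟨0, hm⟩⟩
  have hcardfin : Fintype.card (Fin m) = Module.finrank (ZMod p) F := by
    rw [Fintype.card_fin, hfr]
  set B := basisOfLinearIndependentOfCardEqFinrank li hcardfin with hB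
  have hBi : ∀ i, B i = v i := fun i => by
    rw [hB, coe_basisOfLinearIndependentOfCardEqFinrank]
  refine ⟨b, B, fun i => hBi i, ?_⟩
  have key : ∀ j : Fin m, (B j) ^ p = B (j + 1) := by
    intro j
    rw [hBi, hBi]
    show (b ^ p ^ (j : ℕ)) ^ p = b ^ p ^ ((j + 1 : Fin m) : ℕ)
    rw [← pow_mul, ← pow_succ]
    have hval : ((j + 1 : Fin m) : ℕ) = ((j : ℕ) + 1) % m := by
      rw [Fin.val_add, Fin.val_one']
      conv_rhs => rw [Nat.add_mod, Nat.mod_eq_of_lt j.isLt]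
    rcases Nat.lt_or_ge ((j : ℕ) + 1) m with h | h
    · rw [hval, Nat.mod_eq_of_lt h]
    · have hjm : (j : ℕ) + 1 = m := le_antisymm j.isLt h
      rw [hval, hjm, Nat.mod_self, pow_zero, pow_one]
      exact hbm
  intro x i
  have hsum : x ^ p = ∑ k : Fin m, B.repr x (k - 1) • B k := by
    have h1 : x ^ p = ∑ j : Fin m, B.repr x j • B (j + 1) := by
      conv_lhs => rw [← B.sum_repr x]
      rw [show (∑ j : Fin m, B.repr x j • B j) ^ p = φ (∑ j : Fin m, B.repr x j • B j) from rfl,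
        map_sum]
      refine Finset.sum_congr rfl fun j _ => ?_
      rw [map_smul]
      congr 1
      rw [show φ (B j) = (B j) ^ p from rfl, key]
    rw [h1]
    exact Fintype.sum_equiv (Equiv.addRight (1 : Fin m)) _ _
      (fun j => by rw [Equiv.coe_addRight, add_sub_cancel_right])
  have hrep : B.repr (x ^ p) i = B.repr x (i - 1) := by
    rw [hsum]
    exact congrFun (B.repr_sum_self (fun k => B.repr x (k - 1))) i
  rw [hrep]
  congr 1
  apply Fin.ext
  rw [Fin.sub_def]
  show ((m - (1 : Fin m).val) + (i : ℕ)) % m = ((i : ℕ) + m - 1) % m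
  rcases Nat.lt_or_ge 1 m with h1m | h1m
  · rw [Fin.val_one', Nat.mod_eq_of_lt h1m]
    congr 1
    omega
  · have : m = 1 := by omega
    subst this
    simp [Nat.mod_one]
end
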